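/- Let h, w₁, w₂, c > 0 with w₂ ∉ {0,1}. The four Gaussian RBF-FD second-derivative weights β_{-2}, β_{-1}, β₀, β_{+1} of Theorem 2 on the stencil {x−w₂h, x−h, x, x+w₁h} satisfy: the Taylor expansions around h = 0 of β_{-2}, β_{-1}, β₀, β_{+1} have leading terms 2(w₁−1)/(h²(w₂−1)w₂(w₂+w₁)), 2(w₂−w₁)/(h²(w₂−1)(w₁+1)), −2(w₂−w₁+1)/(h²w₂w₁), and 2(w₂+1)/(h²(w₂+w₁)(w₁²+w₁)) respectively, and these four leading coefficients sum to zero. -/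
import Mathlib


open Filter Asymptotics Topology

/-- `μ₁` of Theorem 2. -/
noncomputable def mu1 (h c w2 w1 : ℝ) : ℝ :=
  -w1 * (2 * c ^ 2 + h ^ 2 * w2 * (w2 + 3) + 3 * h ^ 2)
    + w2 * (2 * c ^ 2 + h ^ 2 * w2 + 3 * h ^ 2) + h ^ 2 * (w2 + 1) * w1 ^ 2

/-- `μ₂` of Theorem 2. -/
noncomputable def mu2 (h c w2 w1 : ℝ) : ℝ :=
  -w2 * (2 * c ^ 2 + h ^ 2 * (w1 - 1) * w1 + h ^ 2)
    + (w1 - 1) * (2 * c ^ 2 - h ^ 2 * w1) + h ^ 2 * (w1 - 1) * w2 ^ 2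

/-- Gaussian RBF--FD second-derivative weight at the node `x - w₂ h`. -/
noncomputable def betam2 (h c w2 w1 : ℝ) : ℝ :=
  ((w1 - 1) * (2 * c ^ 2 - h ^ 2 * w1) + 3 * h ^ 2 * w2 ^ 2 * (w1 - 1)
      - h ^ 2 * w2 * ((w1 - 3) * w1 + 1))
    / (c ^ 2 * h ^ 2 * (w2 - 1) * w2 * (w2 + w1))

/-- Gaussian RBF--FD second-derivative weight at the node `x - h`. -/
noncomputable def betam1 (h c w2 w1 : ℝ) : ℝ :=
  mu1 h c w2 w1 / (c ^ 2 * h ^ 2 * (w2 - 1) * (w1 + 1))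

/-- Gaussian RBF--FD second-derivative weight at the center node `x`. -/
noncomputable def beta0 (h c w2 w1 : ℝ) : ℝ :=
  mu2 h c w2 w1 / (c ^ 2 * h ^ 2 * w2 * w1)

/-- Gaussian RBF--FD second-derivative weight at the node `x + w₁ h`. -/
noncomputable def betap1 (h c w2 w1 : ℝ) : ℝ :=
  ((w2 + 1) * (2 * c ^ 2 + h ^ 2 * w2) + 3 * h ^ 2 * (w2 + 1) * w1 ^ 2
      - h ^ 2 * (w2 * (w2 + 3) + 1) * w1)
    / (c ^ 2 * h ^ 2 * w1 * (w1 + 1) * (w2 + w1))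

/-- The leading `1/h²` parts of the four Gaussian RBF--FD second-derivative weights on
the stencil `{x - w₂h, x - h, x, x + w₁h}` are the classical non-uniform
finite-difference weights, and the four leading coefficients sum to zero. -/
theorem rbf_fd_second_derivative_leading_terms
    (w1 w2 c : ℝ) (hw1 : 0 < w1) (hw2 : 0 < w2) (hw2' : w2 ≠ 1) (hc : 0 < c) :
    ((fun h : ℝ => betam2 h c w2 w1
        - (2 * (w1 - 1) / ((w2 - 1) * w2 * (w2 + w1))) / h ^ 2)
      =O[𝓝[>] (0 : ℝ)] fun _ : ℝ => (1 : ℝ))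
    ∧ ((fun h : ℝ => betam1 h c w2 w1
        - (2 * (w2 - w1) / ((w2 - 1) * (w1 + 1))) / h ^ 2)
      =O[𝓝[>] (0 : ℝ)] fun _ : ℝ => (1 : ℝ))
    ∧ ((fun h : ℝ => beta0 h c w2 w1
        - (-(2 * (w2 - w1 + 1)) / (w2 * w1)) / h ^ 2)
      =O[𝓝[>] (0 : ℝ)] fun _ : ℝ => (1 : ℝ))
    ∧ ((fun h : ℝ => betap1 h c w2 w1
        - (2 * (w2 + 1) / ((w2 + w1) * (w1 ^ 2 + w1))) / h ^ 2)
      =O[𝓝[>] (0 : ℝ)] fun _ : ℝ => (1 : ℝ))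
    ∧ 2 * (w1 - 1) / ((w2 - 1) * w2 * (w2 + w1))
        + 2 * (w2 - w1) / ((w2 - 1) * (w1 + 1))
        + (-(2 * (w2 - w1 + 1)) / (w2 * w1))
        + 2 * (w2 + 1) / ((w2 + w1) * (w1 ^ 2 + w1)) = 0 := by
  have hw10 : w1 ≠ 0 := hw1.ne'
  have hw20 : w2 ≠ 0 := hw2.ne'
  have hw21 : w2 - 1 ≠ 0 := sub_ne_zero.mpr hw2'
  have hww : w2 + w1 ≠ 0 := by positivity
  have hw11 : w1 + 1 ≠ 0 := by positivity
  have hc' : c ≠ 0 := hc.ne'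
  have hmem : ∀ᶠ h in 𝓝[>] (0:ℝ), h ≠ 0 := by
    filter_upwards [self_mem_nhdsWithin] with h hh using ne_of_gt hh
  refine ⟨?_, ?_, ?_, ?_, ?_⟩
  · have he : (fun h : ℝ => betam2 h c w2 w1
        - (2 * (w1 - 1) / ((w2 - 1) * w2 * (w2 + w1))) / h ^ 2)
        =ᶠ[𝓝[>] (0:ℝ)] fun _ =>
          (3 * w2 ^ 2 * (w1 - 1) - w2 * ((w1 - 3) * w1 + 1) - w1 * (w1 - 1))
            / (c ^ 2 * ((w2 - 1) * w2 * (w2 + w1))) := by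
      filter_upwards [hmem] with h hh
      unfold betam2
      field_simp
      ring
    exact he.trans_isBigO (isBigO_const_const _ one_ne_zero _)
  · have he : (fun h : ℝ => betam1 h c w2 w1
        - (2 * (w2 - w1) / ((w2 - 1) * (w1 + 1))) / h ^ 2)
        =ᶠ[𝓝[>] (0:ℝ)] fun _ =>
          (-w1 * (w2 * (w2 + 3) + 3) + w2 * (w2 + 3) + (w2 + 1) * w1 ^ 2)
            / (c ^ 2 * ((w2 - 1) * (w1 + 1))) := by
      filter_upwards [hmem] with h hh
      unfold betam1 mu1
      field_simp
      ring
    exact he.trans_isBigO (isBigO_const_const _ one_ne_zero _)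
  · have he : (fun h : ℝ => beta0 h c w2 w1
        - (-(2 * (w2 - w1 + 1)) / (w2 * w1)) / h ^ 2)
        =ᶠ[𝓝[>] (0:ℝ)] fun _ =>
          (-w2 * ((w1 - 1) * w1 + 1) - w1 * (w1 - 1) + (w1 - 1) * w2 ^ 2)
            / (c ^ 2 * (w2 * w1)) := by
      filter_upwards [hmem] with h hh
      unfold beta0 mu2
      field_simp
      ring
    exact he.trans_isBigO (isBigO_const_const _ one_ne_zero _)
  · have he : (fun h : ℝ => betap1 h c w2 w1
        - (2 * (w2 + 1) / ((w2 + w1) * (w1 ^ 2 + w1))) / h ^ 2)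
        =ᶠ[𝓝[>] (0:ℝ)] fun _ =>
          ((w2 + 1) * w2 + 3 * (w2 + 1) * w1 ^ 2 - (w2 * (w2 + 3) + 1) * w1)
            / (c ^ 2 * (w1 * (w1 + 1) * (w2 + w1))) := by
      filter_upwards [hmem] with h hh
      unfold betap1
      have : w1 ^ 2 + w1 ≠ 0 := by positivity
      field_simp
      ring
    exact he.trans_isBigO (isBigO_const_const _ one_ne_zero _)
  · field_simp
    ring
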